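/- arXiv:1504.05219 — 2 statements merged into one kernel-verified Lean document; each statement's English description precedes it below -/
import Mathlib

section
/- Let α_1, α_2 be real numbers with α_1 + α_2 = 1 and α_1 > 1/2, and let r > 0. If the function l(θ) = (α_1 + α_2·exp(θ))^r, defined for θ in a neighborhood of 0 where α_1 + α_2·exp(θ) > 0, is the Laplace transform of a probability measure on ℝ, then α_2 ≥ 0. -/
/-!
By Cauchy–Schwarz the Laplace transform `L` of a probability measure is log-convex, so
`L(δ) L(-δ) ≥ L(0)² = 1`. For `L(θ) = (α₁ + α₂ e^θ)^r` with `α₁ + α₂ = 1` this says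
`(α₁ + α₂ e^δ)(α₁ + α₂ e^{-δ}) = 1 + 2 α₁ α₂ (cosh δ - 1) ≥ 1`, which forces `α₂ ≥ 0` since `α₁ > 0`.
-/

open MeasureTheory Real ProbabilityTheory

section

variable {Ω : Type*} [MeasurableSpace Ω] {μ : Measure Ω} {X : Ω → ℝ}

lemma memLp_two_exp_half_mul {t : ℝ} (ht : Integrable (fun ω => exp (t * X ω)) μ) :
    MemLp (fun ω => exp (t / 2 * X ω)) 2 μ := by
  have hsqrt : (fun ω => exp (t / 2 * X ω)) = fun ω => √(exp (t * X ω)) := by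
    ext ω
    rw [← exp_half]
    ring_nf
  have hmeas : AEStronglyMeasurable (fun ω => exp (t / 2 * X ω)) μ := by
    rw [hsqrt]
    exact ht.aestronglyMeasurable.aemeasurable.sqrt.aestronglyMeasurable
  refine (memLp_two_iff_integrable_sq hmeas).2 (ht.congr (ae_of_all _ fun ω => ?_))
  simp only [← exp_nat_mul]
  ring_nf

lemma mgf_midpoint_sq_le_mul {s t : ℝ} (hs : Integrable (fun ω => exp (s * X ω)) μ)
    (ht : Integrable (fun ω => exp (t * X ω)) μ) :
    mgf X μ ((s + t) / 2) ^ 2 ≤ mgf X μ s * mgf X μ t := by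
  have holder := integral_mul_le_Lp_mul_Lq_of_nonneg HolderConjugate.two_two
    (ae_of_all _ fun ω => (exp_pos (s / 2 * X ω)).le)
    (ae_of_all _ fun ω => (exp_pos (t / 2 * X ω)).le)
    (by simpa using memLp_two_exp_half_mul hs) (by simpa using memLp_two_exp_half_mul ht)
  have hsq : ∀ u ω, exp (u / 2 * X ω) ^ (2 : ℝ) = exp (u * X ω) := fun u ω => by
    rw [← exp_mul]; ring_nf
  have hprod : ∀ ω, exp (s / 2 * X ω) * exp (t / 2 * X ω) = exp ((s + t) / 2 * X ω) :=
    fun ω => by rw [← exp_add]; ring_nf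
  simp only [hsq, hprod] at holder
  have hs₀ : 0 ≤ mgf X μ s := mgf_nonneg
  have ht₀ : 0 ≤ mgf X μ t := mgf_nonneg
  calc mgf X μ ((s + t) / 2) ^ 2
      ≤ (mgf X μ s ^ (1 / 2 : ℝ) * mgf X μ t ^ (1 / 2 : ℝ)) ^ 2 :=
        pow_le_pow_left₀ mgf_nonneg holder 2
    _ = mgf X μ s * mgf X μ t := by
        rw [mul_pow, ← rpow_natCast, ← rpow_natCast, ← rpow_mul hs₀, ← rpow_mul ht₀]
        norm_num

lemma one_le_mgf_mul_mgf_neg [IsProbabilityMeasure μ] {t : ℝ}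
    (ht : Integrable (fun ω => exp (t * X ω)) μ) (ht' : Integrable (fun ω => exp (-t * X ω)) μ) :
    1 ≤ mgf X μ t * mgf X μ (-t) := by
  simpa using mgf_midpoint_sq_le_mul ht ht'

end

lemma one_le_mul_of_one_le_rpow_mul_rpow {x y r : ℝ} (hx : 0 ≤ x) (hy : 0 ≤ y) (hr : 0 < r)
    (h : 1 ≤ x ^ r * y ^ r) : 1 ≤ x * y := by
  rw [← mul_rpow hx hy] at h
  rwa [← rpow_le_rpow_iff zero_le_one (mul_nonneg hx hy) hr, one_rpow]

lemma mul_add_exp_mul_add_exp_neg {a b : ℝ} (hab : a + b = 1) (t : ℝ) :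
    (a + b * exp t) * (a + b * exp (-t)) = 1 + 2 * a * b * (cosh t - 1) := by
  have hexp : exp t * exp (-t) = 1 := by rw [← exp_add, add_neg_cancel, exp_zero]
  rw [cosh_eq]
  linear_combination b ^ 2 * hexp + (a + b + 1) * hab

lemma nonneg_of_one_le_mul_add_exp_mul_add_exp_neg {a b t : ℝ} (hab : a + b = 1) (ha : 0 < a)
    (ht : t ≠ 0) (h : 1 ≤ (a + b * exp t) * (a + b * exp (-t))) : 0 ≤ b := by
  rw [mul_add_exp_mul_add_exp_neg hab] at h
  have hcosh : 0 < cosh t - 1 := sub_pos.2 (one_lt_cosh.2 ht)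
  have : 0 ≤ b * (2 * a * (cosh t - 1)) := by linarith
  exact nonneg_of_mul_nonneg_left this (by positivity)

/-- If `α₁ + α₂ = 1`, `α₁ > 1/2`, `r > 0`, and
`l(θ) = (α₁ + α₂ exp θ)^r`, positive on a neighborhood of 0, is the Laplace transform of a
probability measure on ℝ there, then `α₂ ≥ 0`. -/
theorem stmt2 (α₁ α₂ r : ℝ) (hsum : α₁ + α₂ = 1) (hα₁ : 1 / 2 < α₁) (hr : 0 < r)
    (μ : Measure ℝ) [IsProbabilityMeasure μ] (ε : ℝ) (hε : 0 < ε)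
    (hpos : ∀ θ : ℝ, |θ| < ε → 0 < α₁ + α₂ * Real.exp θ)
    (hint : ∀ θ : ℝ, |θ| < ε → Integrable (fun x => Real.exp (θ * x)) μ)
    (hlap : ∀ θ : ℝ, |θ| < ε →
        (α₁ + α₂ * Real.exp θ) ^ r = ∫ x, Real.exp (θ * x) ∂μ) :
    0 ≤ α₂ := by
  set δ := ε / 2
  have hδ : |δ| < ε := by rw [abs_of_pos (half_pos hε)]; exact half_lt_self hε
  have hδ' : |-δ| < ε := by rwa [abs_neg]
  have hlog : 1 ≤ (α₁ + α₂ * exp δ) ^ r * (α₁ + α₂ * exp (-δ)) ^ r := by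
    rw [hlap δ hδ, hlap (-δ) hδ']
    exact one_le_mgf_mul_mgf_neg (X := id) (hint δ hδ) (hint (-δ) hδ')
  refine nonneg_of_one_le_mul_add_exp_mul_add_exp_neg hsum (by linarith) (half_pos hε).ne' ?_
  exact one_le_mul_of_one_le_rpow_mul_rpow (hpos δ hδ).le (hpos (-δ) hδ').le hr hlog
end

section
/- Let r ∈ 2ℕ be a positive even integer, let α_0, ..., α_3 ≤ 0 with Σα_i = -1, and Λ_0 = 0, Λ_1, Λ_2, Λ_3 ∈ ℝ³. Then L(θ) = (α_0 + Σ_{i=1}^3 α_i exp⟨Λ_i, θ⟩)^r is the Laplace transform of a probability measure on ℝ³. -/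
/-!
The coefficients `-αᵢ` are nonnegative and sum to `1`, so `ν = ∑ᵢ (-αᵢ) δ_{Λᵢ}` is a probability
measure with Laplace transform `θ ↦ ∑ᵢ (-αᵢ) exp ⟪Λᵢ, θ⟫`. Since `r` is even, `L` is the `r`-th power
of that transform, i.e. the Laplace transform of the `r`-fold convolution of `ν`, realised as the
law of `x₁ + ⋯ + x_r` under the product measure `ν ⊗ ⋯ ⊗ ν`.
-/

open MeasureTheory RealInnerProductSpace

section WeightedDirac

variable {X ι : Type*} [MeasurableSpace X] [Fintype ι]

theorem isProbabilityMeasure_sum_smul_dirac {w : ι → ℝ} (hw : ∀ i, 0 ≤ w i)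
    (hw_sum : ∑ i, w i = 1) (x : ι → X) :
    IsProbabilityMeasure (∑ i, ENNReal.ofReal (w i) • Measure.dirac (x i)) := by
  constructor
  simp only [Measure.coe_finsetSum, Finset.sum_apply, Measure.smul_apply,
    Measure.dirac_apply_of_mem (Set.mem_univ _), smul_eq_mul, mul_one]
  rw [← ENNReal.ofReal_sum_of_nonneg fun i _ => hw i, hw_sum, ENNReal.ofReal_one]

theorem integral_sum_smul_dirac [MeasurableSingletonClass X]
    {E : Type*} [NormedAddCommGroup E] [NormedSpace ℝ E] [CompleteSpace E]
    {w : ι → ℝ} (hw : ∀ i, 0 ≤ w i) (x : ι → X) (f : X → E) :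
    ∫ y, f y ∂(∑ i, ENNReal.ofReal (w i) • Measure.dirac (x i)) = ∑ i, w i • f (x i) := by
  rw [integral_finsetSum_measure fun i _ =>
    (integrable_dirac enorm_lt_top).smul_measure ENNReal.ofReal_ne_top]
  refine Finset.sum_congr rfl fun i _ => ?_
  rw [integral_smul_measure, integral_dirac, ENNReal.toReal_ofReal (hw i)]

end WeightedDirac

theorem integral_exp_inner_map_sum_pi {E ι : Type*} [NormedAddCommGroup E]
    [InnerProductSpace ℝ E] [MeasurableSpace E] [BorelSpace E] [SecondCountableTopology E]
    [Fintype ι] (ν : Measure E) [SigmaFinite ν] (θ : E) :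
    ∫ y, Real.exp ⟪θ, y⟫ ∂(Measure.pi (fun _ : ι => ν)).map (fun x => ∑ j, x j)
      = (∫ y, Real.exp ⟪θ, y⟫ ∂ν) ^ Fintype.card ι := by
  have hsum : Measurable fun x : ι → E => ∑ j, x j :=
    Finset.measurable_sum _ fun j _ => measurable_pi_apply j
  have hexp : Continuous fun y : E => Real.exp ⟪θ, y⟫ := by fun_prop
  rw [integral_map hsum.aemeasurable hexp.aestronglyMeasurable]
  simp only [inner_sum, Real.exp_sum]
  exact integral_fintype_prod_eq_pow (fun y => Real.exp ⟪θ, y⟫)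

theorem stmt12_general (r : ℕ) (heven : Even r)
    (α : Fin 4 → ℝ) (hα : ∀ i, α i ≤ 0) (hsum : ∑ i, α i = -1)
    (Λ : Fin 4 → EuclideanSpace ℝ (Fin 3)) :
    ∃ μ : Measure (EuclideanSpace ℝ (Fin 3)), IsProbabilityMeasure μ ∧
      ∀ θ : EuclideanSpace ℝ (Fin 3),
        (∫ x, Real.exp (⟪θ, x⟫) ∂μ)
          = (∑ i, α i * Real.exp (⟪Λ i, θ⟫)) ^ r := by
  have hw : ∀ i, 0 ≤ -α i := fun i => neg_nonneg.2 (hα i)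
  have hw_sum : ∑ i, -α i = 1 := by rw [Finset.sum_neg_distrib, hsum, neg_neg]
  let ν := ∑ i, ENNReal.ofReal (-α i) • Measure.dirac (Λ i)
  have hν : IsProbabilityMeasure ν := isProbabilityMeasure_sum_smul_dirac hw hw_sum Λ
  refine ⟨(Measure.pi fun _ : Fin r => ν).map (fun x => ∑ j, x j),
    Measure.isProbabilityMeasure_map (by fun_prop), fun θ => ?_⟩
  rw [integral_exp_inner_map_sum_pi, integral_sum_smul_dirac hw, Fintype.card_fin,
    ← heven.neg_pow, ← Finset.sum_neg_distrib]
  simp only [smul_eq_mul, neg_mul, neg_neg, real_inner_comm]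

/-- For a positive even integer `r`, nonpositive `α` summing to `-1`, and
`Λ₀ = 0`, `L(θ) = (Σᵢ αᵢ exp⟨Λᵢ,θ⟩)^r` is the Laplace transform of a probability measure
on ℝ³. -/
theorem stmt12 (r : ℕ) (hr : 0 < r) (heven : Even r)
    (α : Fin 4 → ℝ) (hα : ∀ i, α i ≤ 0) (hsum : ∑ i, α i = -1)
    (Λ : Fin 4 → EuclideanSpace ℝ (Fin 3)) (hΛ0 : Λ 0 = 0) :
    ∃ μ : Measure (EuclideanSpace ℝ (Fin 3)), IsProbabilityMeasure μ ∧
      ∀ θ : EuclideanSpace ℝ (Fin 3),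
        (∫ x, Real.exp (⟪θ, x⟫) ∂μ)
          = (∑ i, α i * Real.exp (⟪Λ i, θ⟫)) ^ r :=
  stmt12_general r heven α hα hsum Λ
end
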